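/- arXiv:1911.11558 — 2 statements merged into one kernel-verified Lean document; each statement's English description precedes it below -/
import Mathlib

section
/- Let R and G be finite sets (races and genders), and let Y-hat be a random prediction variable jointly distributed with random variables Race (valued in R) and Gender (valued in G), conditioned on data X = x. Assume Race and Gender are independent, and assume the predictor is ideally counterfactually fair, i.e., P(Ŷ=y | X=x, Race=r, Gender=g) = P(Ŷ=y | X=x, Race=r', Gender=g') for all r,r' ∈ R and g,g' ∈ G. Then the predictor satisfies group fairness with respect to race: P(Ŷ=y | X=x, Race=r) = P(Ŷ=y | X=x, Race=r') for all r,r' ∈ R. -/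
/-
Conditioning on `EX ∩ {Race = r}` averages the conditional probabilities given
`EX ∩ {Race = r} ∩ {Gender = g}` over `g`, with weights `P(Gender = g | EX, Race = r)`.
Counterfactual fairness makes all these conditional probabilities one constant `c`, so every
such average equals `c`, whatever the weights.
-/

open Finset

/-- Probability of an event under a pmf `p` on a finite sample space. -/
noncomputable def Pr {Ω : Type*} [Fintype Ω] (p : Ω → ℝ) (E : Set Ω) : ℝ :=
  ∑ ω, Set.indicator E p ω

/-- Conditional probability `P(A | B)`. -/
noncomputable def cPr {Ω : Type*} [Fintype Ω] (p : Ω → ℝ) (A B : Set Ω) : ℝ :=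
  Pr p (A ∩ B) / Pr p B

section Partition

variable {Ω ι : Type*} [Fintype Ω] [Fintype ι] (p : Ω → ℝ) (f : Ω → ι)

theorem Pr_eq_sum_Pr_inter_fiber (A : Set Ω) :
    Pr p A = ∑ i, Pr p (A ∩ {ω | f ω = i}) := by
  classical
  simp only [Pr, ← Set.indicator_indicator]
  rw [Finset.sum_comm]
  refine Finset.sum_congr rfl fun ω _ => ?_
  simp [Set.indicator_apply]

variable {p f} {A B : Set Ω} {c : ℝ}

theorem Pr_inter_eq_mul_of_cPr_fiber_eq (hne : ∀ i, Pr p (B ∩ {ω | f ω = i}) ≠ 0)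
    (hc : ∀ i, cPr p A (B ∩ {ω | f ω = i}) = c) :
    Pr p (A ∩ B) = c * Pr p B := by
  rw [Pr_eq_sum_Pr_inter_fiber p f, Pr_eq_sum_Pr_inter_fiber p f B, Finset.mul_sum]
  refine Finset.sum_congr rfl fun i _ => ?_
  rw [← hc i, cPr, div_mul_cancel₀ _ (hne i), Set.inter_assoc]

theorem cPr_eq_of_cPr_fiber_eq [Nonempty ι] (hpos : ∀ i, 0 < Pr p (B ∩ {ω | f ω = i}))
    (hc : ∀ i, cPr p A (B ∩ {ω | f ω = i}) = c) :
    cPr p A B = c := by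
  have hB : 0 < Pr p B := by
    rw [Pr_eq_sum_Pr_inter_fiber p f]
    exact Finset.sum_pos (fun i _ => hpos i) Finset.univ_nonempty
  rw [cPr, Pr_inter_eq_mul_of_cPr_fiber_eq (fun i => (hpos i).ne') hc,
    mul_div_cancel_right₀ _ hB.ne']

end Partition

theorem cf_implies_group_fairness_race_general
    {Ω R G YT : Type*} [Fintype Ω] [Fintype R] [Fintype G]
    (p : Ω → ℝ)
    (Yhat : Ω → YT) (Race : Ω → R) (Gender : Ω → G)
    (EX : Set Ω) (y : YT)
    -- all conditioning events have positive probability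
    (hpos : ∀ (r : R) (g : G),
      0 < Pr p (EX ∩ {ω | Race ω = r} ∩ {ω | Gender ω = g}))
    -- ideal counterfactual fairness
    (hcf : ∀ (r r' : R) (g g' : G),
      cPr p {ω | Yhat ω = y} (EX ∩ {ω | Race ω = r} ∩ {ω | Gender ω = g})
        = cPr p {ω | Yhat ω = y} (EX ∩ {ω | Race ω = r'} ∩ {ω | Gender ω = g'})) :
    ∀ r r' : R,
      cPr p {ω | Yhat ω = y} (EX ∩ {ω | Race ω = r})
        = cPr p {ω | Yhat ω = y} (EX ∩ {ω | Race ω = r'}) := by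
  intro r r'
  rcases isEmpty_or_nonempty G with hG | hG
  · -- `Ω` is empty, so both sides are the junk value `0 / 0`
    have : IsEmpty Ω := Gender.isEmpty
    simp [cPr, Pr]
  · obtain ⟨g₀⟩ := id hG
    have key : ∀ s, cPr p {ω | Yhat ω = y} (EX ∩ {ω | Race ω = s})
        = cPr p {ω | Yhat ω = y} (EX ∩ {ω | Race ω = r} ∩ {ω | Gender ω = g₀}) :=
      fun s => cPr_eq_of_cPr_fiber_eq (hpos s) (fun g => hcf s r g g₀)
    rw [key r, key r']

/-- Counterfactual fairness implies group fairness w.r.t. race. -/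
theorem cf_implies_group_fairness_race
    {Ω R G YT : Type*} [Fintype Ω] [Fintype R] [Fintype G]
    (p : Ω → ℝ) (hp0 : ∀ ω, 0 ≤ p ω) (hp1 : ∑ ω, p ω = 1)
    (Yhat : Ω → YT) (Race : Ω → R) (Gender : Ω → G)
    (EX : Set Ω) (y : YT)
    -- all conditioning events have positive probability
    (hpos : ∀ (r : R) (g : G),
      0 < Pr p (EX ∩ {ω | Race ω = r} ∩ {ω | Gender ω = g}))
    -- Race and Gender are independent (given the data X = x)
    (hind : ∀ (r : R) (g : G),
      cPr p ({ω | Race ω = r} ∩ {ω | Gender ω = g}) EX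
        = cPr p {ω | Race ω = r} EX * cPr p {ω | Gender ω = g} EX)
    -- ideal counterfactual fairness
    (hcf : ∀ (r r' : R) (g g' : G),
      cPr p {ω | Yhat ω = y} (EX ∩ {ω | Race ω = r} ∩ {ω | Gender ω = g})
        = cPr p {ω | Yhat ω = y} (EX ∩ {ω | Race ω = r'} ∩ {ω | Gender ω = g'})) :
    ∀ r r' : R,
      cPr p {ω | Yhat ω = y} (EX ∩ {ω | Race ω = r})
        = cPr p {ω | Yhat ω = y} (EX ∩ {ω | Race ω = r'}) :=
  cf_implies_group_fairness_race_general p Yhat Race Gender EX y hpos hcf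
end

section
/- Under the same hypotheses (Race and Gender independent, predictor ideally counterfactually fair), the predictor satisfies group fairness with respect to gender: P(Ŷ=y | X=x, Gender=g) = P(Ŷ=y | X=x, Gender=g') for all g,g' ∈ G. -/
/-! Ideal counterfactual fairness says that `P(Ŷ = y | X = x, Race = r, Gender = g)` is one
constant `c`. By the law of total probability over the races, `P(Ŷ = y | X = x, Gender = g)`
is an average of these values, hence also `c`, for every gender `g`. -/

open Finset

section

variable {Ω R : Type*} [Fintype Ω] [Fintype R]

theorem Pr_eq_sum_inter_fiber (p : Ω → ℝ) (S : Set Ω) (f : Ω → R) :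
    Pr p S = ∑ r, Pr p (S ∩ {ω | f ω = r}) := by
  unfold Pr
  rw [sum_comm]
  refine sum_congr rfl fun ω _ => ?_
  rw [sum_eq_single_of_mem (f ω) (mem_univ _)
    fun r _ hr => Set.indicator_of_notMem (fun h => hr h.2.symm) p]
  by_cases hS : ω ∈ S <;> simp [Set.indicator_of_mem, Set.indicator_of_notMem, hS]

theorem cPr_eq_of_cPr_inter_fiber_eq [Nonempty R] {p : Ω → ℝ} {A B : Set Ω} {c : ℝ}
    (f : Ω → R) (hpos : ∀ r, 0 < Pr p (B ∩ {ω | f ω = r}))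
    (hc : ∀ r, cPr p A (B ∩ {ω | f ω = r}) = c) :
    cPr p A B = c := by
  have hB : 0 < Pr p B := by
    rw [Pr_eq_sum_inter_fiber p B f]
    exact sum_pos (fun r _ => hpos r) univ_nonempty
  have hAB : Pr p (A ∩ B) = c * Pr p B := by
    rw [Pr_eq_sum_inter_fiber p (A ∩ B) f, Pr_eq_sum_inter_fiber p B f, mul_sum]
    refine sum_congr rfl fun r _ => ?_
    rw [Set.inter_assoc, ← hc r, cPr, div_mul_cancel₀ _ (hpos r).ne']
  rw [cPr, hAB, mul_div_cancel_right₀ _ hB.ne']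

end

theorem cf_implies_group_fairness_gender_general
    {Ω R G YT : Type*} [Fintype Ω] [Fintype R]
    (p : Ω → ℝ) (hp1 : ∑ ω, p ω = 1)
    (Yhat : Ω → YT) (Race : Ω → R) (Gender : Ω → G)
    (EX : Set Ω) (y : YT)
    -- all conditioning events have positive probability
    (hpos : ∀ (r : R) (g : G),
      0 < Pr p (EX ∩ {ω | Race ω = r} ∩ {ω | Gender ω = g}))
    -- ideal counterfactual fairness
    (hcf : ∀ (r r' : R) (g g' : G),
      cPr p {ω | Yhat ω = y} (EX ∩ {ω | Race ω = r} ∩ {ω | Gender ω = g})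
        = cPr p {ω | Yhat ω = y} (EX ∩ {ω | Race ω = r'} ∩ {ω | Gender ω = g'})) :
    ∀ g g' : G,
      cPr p {ω | Yhat ω = y} (EX ∩ {ω | Gender ω = g})
        = cPr p {ω | Yhat ω = y} (EX ∩ {ω | Gender ω = g'}) := by
  intro g g'
  obtain ⟨ω₀, -, -⟩ := exists_ne_zero_of_sum_ne_zero (hp1 ▸ one_ne_zero : ∑ ω, p ω ≠ 0)
  have : Nonempty R := ⟨Race ω₀⟩
  have hconst : ∀ g₁ : G, cPr p {ω | Yhat ω = y} (EX ∩ {ω | Gender ω = g₁})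
      = cPr p {ω | Yhat ω = y} (EX ∩ {ω | Race ω = Race ω₀} ∩ {ω | Gender ω = g}) :=
    fun g₁ => cPr_eq_of_cPr_inter_fiber_eq Race
      (fun r => Set.inter_right_comm EX _ _ ▸ hpos r g₁)
      (fun r => Set.inter_right_comm EX _ _ ▸ hcf r (Race ω₀) g₁ g)
  rw [hconst g, hconst g']

/-- Counterfactual fairness implies group fairness w.r.t. gender. -/
theorem cf_implies_group_fairness_gender
    {Ω R G YT : Type*} [Fintype Ω] [Fintype R] [Fintype G]
    (p : Ω → ℝ) (hp0 : ∀ ω, 0 ≤ p ω) (hp1 : ∑ ω, p ω = 1)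
    (Yhat : Ω → YT) (Race : Ω → R) (Gender : Ω → G)
    (EX : Set Ω) (y : YT)
    -- all conditioning events have positive probability
    (hpos : ∀ (r : R) (g : G),
      0 < Pr p (EX ∩ {ω | Race ω = r} ∩ {ω | Gender ω = g}))
    -- Race and Gender are independent (given the data X = x)
    (hind : ∀ (r : R) (g : G),
      cPr p ({ω | Race ω = r} ∩ {ω | Gender ω = g}) EX
        = cPr p {ω | Race ω = r} EX * cPr p {ω | Gender ω = g} EX)
    -- ideal counterfactual fairness
    (hcf : ∀ (r r' : R) (g g' : G),
      cPr p {ω | Yhat ω = y} (EX ∩ {ω | Race ω = r} ∩ {ω | Gender ω = g})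
        = cPr p {ω | Yhat ω = y} (EX ∩ {ω | Race ω = r'} ∩ {ω | Gender ω = g'})) :
    ∀ g g' : G,
      cPr p {ω | Yhat ω = y} (EX ∩ {ω | Gender ω = g})
        = cPr p {ω | Yhat ω = y} (EX ∩ {ω | Gender ω = g'}) :=
  cf_implies_group_fairness_gender_general p hp1 Yhat Race Gender EX y hpos hcf
end
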